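/- arXiv:quant-ph/0304096 — 10 statements merged into one kernel-verified Lean document; each statement's English description precedes it below -/
import Mathlib

section
/- Assume 𝒱 : ℝ → ℂ³ is continuously differentiable and let Z̃ : ℝ → ℂ³ be the solution of dZ̃/dt = 𝒱(t), Z̃(0) = Z₀. Then for every T > 0 and every j ∈ {1,…,6} there exist constants C > 0 and ε₀ > 0 such that for all 0 < ε < ε₀ and all integers n ≥ 0 with nε ≤ T one has ‖Z_ε^j(nε) − Z̃(nε)‖ ≤ C·√ε; in particular each process Z_ε^j converges to the basic trajectory Z̃ as ε → 0⁺. -/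
/- The six cube vertices u¹,…,u⁶ (indexed by `Fin 6`, indices mod 6), viewed in ℝ³. -/
def uu : Fin 6 → Fin 3 → ℝ :=
  ![![-1,-1,-1], ![-1,-1,1], ![1,-1,1], ![1,1,1], ![1,1,-1], ![-1,1,-1]]

/- The same vertices viewed in ℂ³; the cyclic permutation s₁ sends uʲ to u^{j+1}. -/
noncomputable def uC : Fin 6 → Fin 3 → ℂ := fun j k => ((uu j k : ℝ) : ℂ)

open Fin.NatCast

set_option maxHeartbeats 2000000

lemma uC_norm_le (a : Fin 6) : ‖uC a‖ ≤ 1 := by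
  rw [pi_norm_le_iff_of_nonneg zero_le_one]
  intro k
  fin_cases a <;> fin_cases k <;> norm_num [uC, uu]

/-- if `𝒱` is continuously differentiable and `Zt` solves
`dZ̃/dt = 𝒱(t)`, `Z̃(0) = Z₀`, then for every `T > 0` and every `j` there are
`C > 0` and `ε₀ > 0` such that for all `0 < ε < ε₀` and all `n` with `nε ≤ T`,
`‖Z_ε^j(nε) − Z̃(nε)‖ ≤ C √ε` (so each `Z_ε^j` converges to the basic
trajectory `Z̃` as `ε → 0⁺`). Here `Z ε j n` denotes `Z_ε^j(nε)`, defined by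
the recursion (1)–(2) with the permutation s₁. -/
theorem stmt1 (ℏ m : ℝ) (hℏ : 0 < ℏ) (hm : 0 < m)
    (Z₀ : Fin 3 → ℂ) (𝒱 : ℝ → Fin 3 → ℂ) (h𝒱 : ContDiff ℝ 1 𝒱)
    (Zt : ℝ → Fin 3 → ℂ) (hZt0 : Zt 0 = Z₀)
    (hZt : ∀ t : ℝ, HasDerivAt Zt (𝒱 t) t)
    (Z : ℝ → Fin 6 → ℕ → Fin 3 → ℂ)
    (hZ0 : ∀ ε : ℝ, 0 < ε → ∀ j, Z ε j 0 = Z₀)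
    (hZrec : ∀ ε : ℝ, 0 < ε → ∀ j n, Z ε j (n + 1) = Z ε j n
      + (ε : ℂ) • 𝒱 (((6 * (n / 6 + 1) : ℕ) : ℝ) * ε)
      + ((1 + Complex.I) * (Real.sqrt (3 * ℏ * ε / (8 * m)) : ℂ)) •
          (uC (j + ((n + 1 : ℕ) : Fin 6)) - uC (j + ((n : ℕ) : Fin 6)))) :
    ∀ T : ℝ, 0 < T → ∀ j : Fin 6, ∃ C : ℝ, 0 < C ∧ ∃ ε₀ : ℝ, 0 < ε₀ ∧
      ∀ ε : ℝ, 0 < ε → ε < ε₀ → ∀ n : ℕ, (n : ℝ) * ε ≤ T →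
        ‖Z ε j n - Zt ((n : ℝ) * ε)‖ ≤ C * Real.sqrt ε := by
  intro T hT j
  have hVc : Continuous 𝒱 := h𝒱.continuous
  obtain ⟨M0, hM0⟩ := (isCompact_Icc : IsCompact (Set.Icc (0:ℝ) (T+6))).exists_bound_of_continuousOn
      ((h𝒱.continuous_deriv le_rfl).continuousOn)
  set M := max M0 0 with hMdef
  have hM : 0 ≤ M := le_max_right _ _
  have hMb : ∀ x ∈ Set.Icc (0:ℝ) (T+6), ‖deriv 𝒱 x‖ ≤ M :=
    fun x hx => (hM0 x hx).trans (le_max_left _ _)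
  refine ⟨6*M*T + 4*Real.sqrt (3*ℏ/(8*m)) + 1, by positivity, 1, one_pos, ?_⟩
  intro ε hε hε1 n hnT
  set c : ℂ := (1 + Complex.I) * (Real.sqrt (3 * ℏ * ε / (8 * m)) : ℂ) with hc
  -- closed form of the discrete process
  have hclosed : ∀ N : ℕ, Z ε j N = Z₀
      + (∑ k ∈ Finset.range N, (ε:ℂ) • 𝒱 (((6*(k/6+1):ℕ):ℝ)*ε))
      + c • (uC (j + (N : Fin 6)) - uC j) := by
    intro N
    induction N with
    | zero => simp [hZ0 ε hε j]
    | succ N ih =>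
      rw [hZrec ε hε j N, ih, Finset.sum_range_succ]
      module
  -- fundamental theorem of calculus
  have hftc : ∫ s in (0:ℝ)..((n:ℝ)*ε), 𝒱 s = Zt ((n:ℝ)*ε) - Z₀ := by
    rw [intervalIntegral.integral_eq_sub_of_hasDerivAt (fun t _ => (hZt t))
      (hVc.intervalIntegrable _ _), hZt0]
  -- splitting the integral
  have hsplit : ∑ k ∈ Finset.range n, ∫ s in ((k:ℝ)*ε)..(((k:ℝ)+1)*ε), 𝒱 s
      = ∫ s in (0:ℝ)..((n:ℝ)*ε), 𝒱 s := by
    have := intervalIntegral.sum_integral_adjacent_intervals (a := fun k => (k:ℝ)*ε)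
      (f := 𝒱) (μ := MeasureTheory.volume) (n := n)
      (fun k _ => hVc.intervalIntegrable _ _)
    simpa using this
  -- per-step estimate
  have hterm : ∀ k, k < n →
      ‖(ε:ℂ) • 𝒱 (((6*(k/6+1):ℕ):ℝ)*ε) - ∫ s in ((k:ℝ)*ε)..(((k:ℝ)+1)*ε), 𝒱 s‖
        ≤ M * (6*ε) * ε := by
    intro k hk
    have hkn : (k:ℝ) + 1 ≤ (n:ℝ) := by exact_mod_cast hk
    have hnat : k + 1 ≤ 6*(k/6+1) ∧ 6*(k/6+1) ≤ k + 6 := by omega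
    have hcast1 : (k:ℝ) + 1 ≤ ((6*(k/6+1):ℕ):ℝ) := by exact_mod_cast hnat.1
    have hcast2 : ((6*(k/6+1):ℕ):ℝ) ≤ (k:ℝ) + 6 := by exact_mod_cast hnat.2
    have hsm : (ε:ℂ) • 𝒱 (((6*(k/6+1):ℕ):ℝ)*ε)
        = ∫ _s in ((k:ℝ)*ε)..(((k:ℝ)+1)*ε), 𝒱 (((6*(k/6+1):ℕ):ℝ)*ε) := by
      rw [intervalIntegral.integral_const, ← Complex.coe_algebraMap, algebraMap_smul]
      congr 1
      ring
    rw [hsm, ← intervalIntegral.integral_sub (intervalIntegrable_const)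
      (hVc.intervalIntegrable _ _)]
    have hb : ∀ s ∈ Set.uIoc ((k:ℝ)*ε) (((k:ℝ)+1)*ε),
        ‖𝒱 (((6*(k/6+1):ℕ):ℝ)*ε) - 𝒱 s‖ ≤ M * (6*ε) := by
      intro s hs
      rw [Set.uIoc_of_le (by nlinarith [hε.le])] at hs
      obtain ⟨hs1, hs2⟩ := hs
      have hεT : ε ≤ 1 := hε1.le
      have hk0 : (0:ℝ) ≤ (k:ℝ) := Nat.cast_nonneg k
      have hsI : s ∈ Set.Icc (0:ℝ) (T+6) := by
        constructor
        · nlinarith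
        · nlinarith
      have htI : ((6*(k/6+1):ℕ):ℝ)*ε ∈ Set.Icc (0:ℝ) (T+6) := by
        constructor
        · positivity
        · nlinarith
      have := Convex.norm_image_sub_le_of_norm_deriv_le
        (f := 𝒱) (s := Set.Icc (0:ℝ) (T+6))
        (fun x _ => (h𝒱.differentiable one_ne_zero).differentiableAt)
        hMb (convex_Icc _ _) hsI htI
      refine this.trans ?_
      have habs : ‖((6*(k/6+1):ℕ):ℝ)*ε - s‖ ≤ 6*ε := by
        rw [Real.norm_eq_abs, abs_of_nonneg (by nlinarith)]
        nlinarith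
      nlinarith [norm_nonneg (((6*(k/6+1):ℕ):ℝ)*ε - s)]
    calc ‖∫ s in ((k:ℝ)*ε)..(((k:ℝ)+1)*ε), (𝒱 (((6*(k/6+1):ℕ):ℝ)*ε) - 𝒱 s)‖
        ≤ M * (6*ε) * |(((k:ℝ)+1)*ε) - ((k:ℝ)*ε)| :=
          intervalIntegral.norm_integral_le_of_norm_le_const hb
      _ = M * (6*ε) * ε := by
          rw [show (((k:ℝ)+1)*ε) - ((k:ℝ)*ε) = ε by ring, abs_of_pos hε]
  -- sum estimate
  have hsum : ‖(∑ k ∈ Finset.range n, (ε:ℂ) • 𝒱 (((6*(k/6+1):ℕ):ℝ)*ε))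
      - ∫ s in (0:ℝ)..((n:ℝ)*ε), 𝒱 s‖ ≤ 6*M*ε*T := by
    rw [← hsplit, ← Finset.sum_sub_distrib]
    calc ‖∑ k ∈ Finset.range n, ((ε:ℂ) • 𝒱 (((6*(k/6+1):ℕ):ℝ)*ε)
          - ∫ s in ((k:ℝ)*ε)..(((k:ℝ)+1)*ε), 𝒱 s)‖
        ≤ ∑ k ∈ Finset.range n, ‖(ε:ℂ) • 𝒱 (((6*(k/6+1):ℕ):ℝ)*ε)
          - ∫ s in ((k:ℝ)*ε)..(((k:ℝ)+1)*ε), 𝒱 s‖ := norm_sum_le _ _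
      _ ≤ ∑ _k ∈ Finset.range n, M * (6*ε) * ε :=
          Finset.sum_le_sum (fun k hk => hterm k (Finset.mem_range.1 hk))
      _ = (n:ℝ) * (M * (6*ε) * ε) := by
          rw [Finset.sum_const, Finset.card_range, nsmul_eq_mul]
      _ = 6*M*ε*((n:ℝ)*ε) := by ring
      _ ≤ 6*M*ε*T := by
          have h1 : (0:ℝ) ≤ 6*M*ε := by positivity
          exact mul_le_mul_of_nonneg_left hnT h1
  -- noise estimate
  have hcnorm : ‖c‖ ≤ 2 * (Real.sqrt (3*ℏ/(8*m)) * Real.sqrt ε) := by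
    rw [hc, norm_mul]
    have h1 : ‖(1:ℂ) + Complex.I‖ ≤ 2 := (norm_add_le _ _).trans (by simp; norm_num)
    have h2 : ‖((Real.sqrt (3*ℏ*ε/(8*m)) : ℝ) : ℂ)‖
        = Real.sqrt (3*ℏ/(8*m)) * Real.sqrt ε := by
      rw [Complex.norm_real, Real.norm_eq_abs, abs_of_nonneg (Real.sqrt_nonneg _),
        show 3*ℏ*ε/(8*m) = (3*ℏ/(8*m))*ε by ring, Real.sqrt_mul (by positivity)]
    rw [h2]
    exact mul_le_mul_of_nonneg_right h1 (by positivity)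
  have hw : ‖uC (j + (n : Fin 6)) - uC j‖ ≤ 2 := by
    calc ‖uC (j + (n : Fin 6)) - uC j‖ ≤ ‖uC (j + (n : Fin 6))‖ + ‖uC j‖ := norm_sub_le _ _
      _ ≤ 2 := by linarith [uC_norm_le (j + (n : Fin 6)), uC_norm_le j]
  have hnoise : ‖c • (uC (j + (n : Fin 6)) - uC j)‖
      ≤ 4 * Real.sqrt (3*ℏ/(8*m)) * Real.sqrt ε := by
    rw [norm_smul]
    calc ‖c‖ * ‖uC (j + (n : Fin 6)) - uC j‖
        ≤ (2 * (Real.sqrt (3*ℏ/(8*m)) * Real.sqrt ε)) * 2 := by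
          apply mul_le_mul hcnorm hw (norm_nonneg _) (by positivity)
      _ = 4 * Real.sqrt (3*ℏ/(8*m)) * Real.sqrt ε := by ring
  -- assemble
  have hdiff : Z ε j n - Zt ((n:ℝ)*ε)
      = ((∑ k ∈ Finset.range n, (ε:ℂ) • 𝒱 (((6*(k/6+1):ℕ):ℝ)*ε))
          - ∫ s in (0:ℝ)..((n:ℝ)*ε), 𝒱 s)
        + c • (uC (j + (n : Fin 6)) - uC j) := by
    have hzt : Zt ((n:ℝ)*ε) = Z₀ + ∫ s in (0:ℝ)..((n:ℝ)*ε), 𝒱 s := by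
      rw [hftc]; abel
    rw [hclosed n, hzt]; abel
  have hsq : ε ≤ Real.sqrt ε := by
    have h1 : Real.sqrt ε ≤ 1 := Real.sqrt_le_one.mpr hε1.le
    have h2 : Real.sqrt ε * Real.sqrt ε = ε := Real.mul_self_sqrt hε.le
    nlinarith [Real.sqrt_nonneg ε]
  rw [hdiff]
  calc ‖((∑ k ∈ Finset.range n, (ε:ℂ) • 𝒱 (((6*(k/6+1):ℕ):ℝ)*ε))
          - ∫ s in (0:ℝ)..((n:ℝ)*ε), 𝒱 s)
        + c • (uC (j + (n : Fin 6)) - uC j)‖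
      ≤ 6*M*ε*T + 4 * Real.sqrt (3*ℏ/(8*m)) * Real.sqrt ε :=
        (norm_add_le _ _).trans (add_le_add hsum hnoise)
    _ ≤ (6*M*T + 4*Real.sqrt (3*ℏ/(8*m)) + 1) * Real.sqrt ε := by
        nlinarith [Real.sqrt_nonneg ε, Real.sqrt_nonneg (3*ℏ/(8*m)), hM, hT.le, hsq,
          mul_le_mul_of_nonneg_left hsq (by positivity : (0:ℝ) ≤ 6*M*T)]
end

section
/- Let σ be any permutation of {1,…,6} with σ⁶ = id, and write suʲ = u^{σ(j)}. Then ∑_{n=0}^{5} ∑_{j=1}^{6} (sⁿuʲ − uʲ) × (s^{n+1}uʲ − sⁿuʲ) = 6·∑_{j=1}^{6} uʲ × (suʲ). -/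
open Matrix

/-- for any permutation σ of {1,…,6} with σ⁶ = id,
`∑_{n=0}^{5} ∑_{j=1}^{6} (sⁿuʲ − uʲ) × (s^{n+1}uʲ − sⁿuʲ) = 6·∑_{j=1}^{6} uʲ × (suʲ)`. -/
theorem stmt4 (σ : Equiv.Perm (Fin 6)) (hσ : σ ^ 6 = 1) :
    ∑ n ∈ Finset.range 6, ∑ j : Fin 6,
        crossProduct (uu ((σ ^ n) j) - uu j) (uu ((σ ^ (n + 1)) j) - uu ((σ ^ n) j))
      = (6 : ℝ) • ∑ j : Fin 6, crossProduct (uu j) (uu (σ j)) := by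
  have cross_expand : ∀ a b c : Fin 3 → ℝ,
      crossProduct (a - c) (b - a)
        = crossProduct a b - crossProduct c b + crossProduct c a := by
    intro a b c
    simp only [map_sub, LinearMap.sub_apply, cross_self]
    abel
  -- shift invariance of inner sum
  have key : ∀ j : Fin 6, ∑ n ∈ Finset.range 6, uu ((σ ^ (n + 1)) j)
      = ∑ n ∈ Finset.range 6, uu ((σ ^ n) j) := by
    intro j
    have h7 : ∑ n ∈ Finset.range 7, uu ((σ ^ n) j)
        = (∑ n ∈ Finset.range 6, uu ((σ ^ (n + 1)) j)) + uu ((σ ^ 0) j) :=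
      Finset.sum_range_succ' _ 6
    have h7' : ∑ n ∈ Finset.range 7, uu ((σ ^ n) j)
        = (∑ n ∈ Finset.range 6, uu ((σ ^ n) j)) + uu ((σ ^ 6) j) :=
      Finset.sum_range_succ _ 6
    rw [h7] at h7'
    simpa [hσ] using h7'
  calc
    ∑ n ∈ Finset.range 6, ∑ j : Fin 6,
        crossProduct (uu ((σ ^ n) j) - uu j) (uu ((σ ^ (n + 1)) j) - uu ((σ ^ n) j))
      = ∑ n ∈ Finset.range 6, ∑ j : Fin 6,
          (crossProduct (uu ((σ ^ n) j)) (uu ((σ ^ (n + 1)) j))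
            - crossProduct (uu j) (uu ((σ ^ (n + 1)) j))
            + crossProduct (uu j) (uu ((σ ^ n) j))) := by
        simp only [cross_expand]
    _ = (∑ n ∈ Finset.range 6, ∑ j : Fin 6,
          crossProduct (uu ((σ ^ n) j)) (uu ((σ ^ (n + 1)) j)))
        - (∑ n ∈ Finset.range 6, ∑ j : Fin 6,
          crossProduct (uu j) (uu ((σ ^ (n + 1)) j)))
        + (∑ n ∈ Finset.range 6, ∑ j : Fin 6,
          crossProduct (uu j) (uu ((σ ^ n) j))) := by
        simp [Finset.sum_add_distrib, Finset.sum_sub_distrib]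
    _ = (6 : ℝ) • ∑ j : Fin 6, crossProduct (uu j) (uu (σ j)) := by
        have hA : ∀ n, ∑ j : Fin 6,
            crossProduct (uu ((σ ^ n) j)) (uu ((σ ^ (n + 1)) j))
              = ∑ j : Fin 6, crossProduct (uu j) (uu (σ j)) := by
          intro n
          have := Equiv.sum_comp (σ ^ n : Equiv.Perm (Fin 6))
            (fun j => crossProduct (uu j) (uu (σ j)))
          rw [← this]
          refine Finset.sum_congr rfl fun j _ => ?_
          have : (σ ^ (n + 1)) j = σ ((σ ^ n) j) := by
            rw [pow_succ']; rfl
          rw [this]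
        have hBC : (∑ n ∈ Finset.range 6, ∑ j : Fin 6,
            crossProduct (uu j) (uu ((σ ^ (n + 1)) j)))
              = ∑ n ∈ Finset.range 6, ∑ j : Fin 6,
            crossProduct (uu j) (uu ((σ ^ n) j)) := by
          rw [Finset.sum_comm, Finset.sum_comm (s := Finset.range 6)]
          refine Finset.sum_congr rfl fun j _ => ?_
          rw [← map_sum, ← map_sum, key]
        rw [hBC]
        simp only [hA, Finset.sum_const, Finset.card_range]
        rw [sub_add_cancel, ← Nat.cast_smul_eq_nsmul ℝ]
        norm_num
end

section
/- Let σ be any permutation of {1,…,6} with σ⁶ = id, acting by suʲ = u^{σ(j)}. Define the mean angular momentum σ̄ = (1/36)∑_{n=0}^{5}∑_{j=1}^{6} rₙʲ × pₙʲ. Then σ̄ = r̃ × (mṽ) + (ℏ/16)·∑_{j=1}^{6} uʲ × (suʲ), where r̃ = (1/6)∑_{n=0}^{5} r̃ₙ. -/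
open Matrix

lemma cp_expand (a b : ℝ) (x u y v : Fin 3 → ℝ) :
    crossProduct (x + a • u) (y + b • v)
      = crossProduct x y + b • crossProduct x v + a • crossProduct u y
        + (a * b) • crossProduct u v := by
  simp only [map_add, _root_.map_smul, LinearMap.add_apply, LinearMap.smul_apply, smul_add, smul_smul]
  module

lemma cp_sub (A B C : Fin 3 → ℝ) :
    crossProduct (A - B) (C - A)
      = crossProduct A C - crossProduct B C + crossProduct B A := by
  simp only [map_sub, LinearMap.sub_apply, cross_self]
  abel

lemma cp_sum_left {ι : Type*} (s : Finset ι) (f : ι → Fin 3 → ℝ) (y : Fin 3 → ℝ) :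
    ∑ j ∈ s, crossProduct (f j) y = crossProduct (∑ j ∈ s, f j) y := by
  rw [map_sum, LinearMap.sum_apply]

/-- for any permutation σ of {1,…,6} with σ⁶ = id, the mean
angular momentum `σ̄ = (1/36)∑_{n=0}^{5}∑_{j=1}^{6} rₙʲ × pₙʲ` of the process
`rₙʲ = r̃ₙ + √(3ℏε/(8m))(sⁿuʲ − uʲ)`, `pₙʲ = mṽ + √(3ℏm/(8ε))(s^{n+1}uʲ − sⁿuʲ)`
(with `r̃ₙ = r̃₀ + nεṽ`) satisfies
`σ̄ = r̃ × (mṽ) + (ℏ/16)·∑_{j=1}^{6} uʲ × (suʲ)`, where `r̃ = (1/6)∑_{n=0}^{5} r̃ₙ`. -/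
theorem stmt5 (ℏ m ε : ℝ) (hℏ : 0 < ℏ) (hm : 0 < m) (hε : 0 < ε)
    (r₀ v : Fin 3 → ℝ) (σ : Equiv.Perm (Fin 6)) (hσ : σ ^ 6 = 1)
    (rt : ℕ → Fin 3 → ℝ) (hrt : ∀ n, rt n = r₀ + ((n : ℝ) * ε) • v)
    (r : ℕ → Fin 6 → Fin 3 → ℝ)
    (hr : ∀ n j, r n j = rt n + Real.sqrt (3 * ℏ * ε / (8 * m)) • (uu ((σ ^ n) j) - uu j))
    (p : ℕ → Fin 6 → Fin 3 → ℝ)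
    (hp : ∀ n j, p n j = m • v
      + Real.sqrt (3 * ℏ * m / (8 * ε)) • (uu ((σ ^ (n + 1)) j) - uu ((σ ^ n) j))) :
    (1 / 36 : ℝ) • ∑ n ∈ Finset.range 6, ∑ j : Fin 6, crossProduct (r n j) (p n j)
      = crossProduct ((1 / 6 : ℝ) • ∑ n ∈ Finset.range 6, rt n) (m • v)
        + (ℏ / 16) • ∑ j : Fin 6, crossProduct (uu j) (uu (σ j)) := by
  set a := Real.sqrt (3 * ℏ * ε / (8 * m)) with ha
  set b := Real.sqrt (3 * ℏ * m / (8 * ε)) with hb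
  have hab : a * b = 3 * ℏ / 8 := by
    rw [ha, hb, ← Real.sqrt_mul (by positivity),
      show 3 * ℏ * ε / (8 * m) * (3 * ℏ * m / (8 * ε)) = (3 * ℏ / 8) ^ 2 by
        field_simp]
    exact Real.sqrt_sq (by positivity)
  have hσ6 : ∀ j, (σ ^ 6) j = j := fun j => by rw [hσ]; rfl
  set S := ∑ j : Fin 6, crossProduct (uu j) (uu (σ j)) with hS
  set X := ∑ n ∈ Finset.range 6, crossProduct (rt n) (m • v) with hX
  -- inner sum for fixed n
  have hinner : ∀ n, ∑ j : Fin 6, crossProduct (r n j) (p n j)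
      = (6 : ℝ) • crossProduct (rt n) (m • v)
        + (a * b) • ∑ j : Fin 6,
            (crossProduct (uu ((σ ^ n) j)) (uu ((σ ^ (n+1)) j))
              - crossProduct (uu j) (uu ((σ ^ (n+1)) j))
              + crossProduct (uu j) (uu ((σ ^ n) j))) := by
    intro n
    have e1 : ∀ j : Fin 6, crossProduct (r n j) (p n j)
        = crossProduct (rt n) (m • v)
          + b • crossProduct (rt n) (uu ((σ ^ (n+1)) j) - uu ((σ ^ n) j))
          + a • crossProduct (uu ((σ ^ n) j) - uu j) (m • v)
          + (a * b) • (crossProduct (uu ((σ ^ n) j)) (uu ((σ ^ (n+1)) j))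
              - crossProduct (uu j) (uu ((σ ^ (n+1)) j))
              + crossProduct (uu j) (uu ((σ ^ n) j))) := by
      intro j
      rw [hr, hp, cp_expand, cp_sub]
    rw [Finset.sum_congr rfl (fun j _ => e1 j)]
    rw [Finset.sum_add_distrib, Finset.sum_add_distrib, Finset.sum_add_distrib]
    have s1 : ∑ _j : Fin 6, crossProduct (rt n) (m • v)
        = (6 : ℝ) • crossProduct (rt n) (m • v) := by
      rw [Finset.sum_const, Finset.card_univ, Fintype.card_fin,
        ← Nat.cast_smul_eq_nsmul ℝ]
      norm_num
    have s2 : ∑ j : Fin 6, b • crossProduct (rt n) (uu ((σ ^ (n+1)) j) - uu ((σ ^ n) j))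
        = 0 := by
      rw [← Finset.smul_sum, ← map_sum]
      have : ∑ j : Fin 6, (uu ((σ ^ (n+1)) j) - uu ((σ ^ n) j)) = 0 := by
        rw [Finset.sum_sub_distrib, Equiv.sum_comp (σ ^ (n+1)) uu,
          Equiv.sum_comp (σ ^ n) uu, sub_self]
      rw [this, map_zero, smul_zero]
    have s3 : ∑ j : Fin 6, a • crossProduct (uu ((σ ^ n) j) - uu j) (m • v) = 0 := by
      rw [← Finset.smul_sum, cp_sum_left]
      have : ∑ j : Fin 6, (uu ((σ ^ n) j) - uu j) = 0 := by
        rw [Finset.sum_sub_distrib, Equiv.sum_comp (σ ^ n) uu, sub_self]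
      rw [this, map_zero, LinearMap.zero_apply, smul_zero]
    rw [s1, s2, s3, ← Finset.smul_sum]
    abel
  rw [Finset.sum_congr rfl (fun n _ => hinner n), Finset.sum_add_distrib,
    ← Finset.smul_sum, ← Finset.smul_sum]
  -- the fluctuation double sum
  have hfluc : ∑ n ∈ Finset.range 6, ∑ j : Fin 6,
      (crossProduct (uu ((σ ^ n) j)) (uu ((σ ^ (n+1)) j))
        - crossProduct (uu j) (uu ((σ ^ (n+1)) j))
        + crossProduct (uu j) (uu ((σ ^ n) j))) = (6 : ℝ) • S := by
    have split : ∀ n ∈ Finset.range 6, ∑ j : Fin 6,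
        (crossProduct (uu ((σ ^ n) j)) (uu ((σ ^ (n+1)) j))
          - crossProduct (uu j) (uu ((σ ^ (n+1)) j))
          + crossProduct (uu j) (uu ((σ ^ n) j)))
        = S - ∑ j : Fin 6, crossProduct (uu j) (uu ((σ ^ (n+1)) j))
            + ∑ j : Fin 6, crossProduct (uu j) (uu ((σ ^ n) j)) := by
      intro n _
      rw [Finset.sum_add_distrib, Finset.sum_sub_distrib]
      congr 2
      have hcomp : ∀ j : Fin 6, (σ ^ (n+1)) j = σ ((σ ^ n) j) := by
        intro j; rw [pow_succ']; rfl
      calc ∑ j : Fin 6, crossProduct (uu ((σ ^ n) j)) (uu ((σ ^ (n+1)) j))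
          = ∑ j : Fin 6, crossProduct (uu ((σ ^ n) j)) (uu (σ ((σ ^ n) j))) := by
            exact Finset.sum_congr rfl (fun j _ => by rw [hcomp])
        _ = S := Equiv.sum_comp (σ ^ n) (fun k => crossProduct (uu k) (uu (σ k)))
    rw [Finset.sum_congr rfl split, Finset.sum_add_distrib, Finset.sum_sub_distrib,
      Finset.sum_const, Finset.card_range]
    have shift : ∑ n ∈ Finset.range 6, ∑ j : Fin 6, crossProduct (uu j) (uu ((σ ^ (n+1)) j))
        = ∑ n ∈ Finset.range 6, ∑ j : Fin 6, crossProduct (uu j) (uu ((σ ^ n) j)) := by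
      have h7 : ∑ n ∈ Finset.range 7, ∑ j : Fin 6, crossProduct (uu j) (uu ((σ ^ n) j))
          = ∑ n ∈ Finset.range 6, ∑ j : Fin 6, crossProduct (uu j) (uu ((σ ^ (n+1)) j))
            + ∑ j : Fin 6, crossProduct (uu j) (uu ((σ ^ 0) j)) :=
        Finset.sum_range_succ' _ 6
      rw [Finset.sum_range_succ] at h7
      have h60 : ∑ j : Fin 6, crossProduct (uu j) (uu ((σ ^ 6) j))
          = ∑ j : Fin 6, crossProduct (uu j) (uu ((σ ^ 0) j)) := by
        exact Finset.sum_congr rfl (fun j _ => by rw [hσ6]; rfl)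
      rw [h60] at h7
      exact add_right_cancel h7.symm
    rw [shift, sub_add_cancel]
    rw [← Nat.cast_smul_eq_nsmul ℝ]; norm_num
  rw [hfluc, hab]
  -- RHS first term
  have hrhs : crossProduct ((1 / 6 : ℝ) • ∑ n ∈ Finset.range 6, rt n) (m • v)
      = (1 / 6 : ℝ) • X := by
    rw [LinearMap.map_smul₂, hX, ← cp_sum_left]
  rw [hrhs]
  module
end

section
/- For the cyclic permutation s₁, the mean angular momentum σ̄ = (1/36)∑_{n=0}^{5}∑_{j=1}^{6} rₙʲ × pₙʲ satisfies σ̄ = r̃ × (mṽ) + (ℏ/2)·(−1, 1, 1), where r̃ = (1/6)∑_{n=0}^{5} r̃ₙ; in other words, the real part of the process carries a mean intrinsic angular momentum whose three components each have absolute value ℏ/2. -/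
open Matrix
open Fin.NatCast

lemma uu0 : uu 0 = ![-1,-1,-1] := rfl
lemma uu1 : uu 1 = ![-1,-1,1] := rfl
lemma uu2 : uu 2 = ![1,-1,1] := rfl
lemma uu3 : uu 3 = ![1,1,1] := rfl
lemma uu4 : uu 4 = ![1,1,-1] := rfl
lemma uu5 : uu 5 = ![-1,1,-1] := rfl

set_option maxHeartbeats 4000000 in
/-- for the cyclic permutation s₁, the mean angular momentum
`σ̄ = (1/36)∑_{n=0}^{5}∑_{j=1}^{6} rₙʲ × pₙʲ` satisfies
`σ̄ = r̃ × (mṽ) + (ℏ/2)·(−1,1,1)` with `r̃ = (1/6)∑_{n=0}^{5} r̃ₙ`; in particular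
each component of the mean intrinsic angular momentum `σ̄ − r̃ × (mṽ)` has
absolute value `ℏ/2`. -/
theorem stmt6 (ℏ m ε : ℝ) (hℏ : 0 < ℏ) (hm : 0 < m) (hε : 0 < ε)
    (r₀ v : Fin 3 → ℝ)
    (rt : ℕ → Fin 3 → ℝ) (hrt : ∀ n, rt n = r₀ + ((n : ℝ) * ε) • v)
    (r : ℕ → Fin 6 → Fin 3 → ℝ)
    (hr : ∀ (n : ℕ) (j : Fin 6), r n j = rt n
      + Real.sqrt (3 * ℏ * ε / (8 * m)) • (uu (j + (n : Fin 6)) - uu j))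
    (p : ℕ → Fin 6 → Fin 3 → ℝ)
    (hp : ∀ (n : ℕ) (j : Fin 6), p n j = m • v
      + Real.sqrt (3 * ℏ * m / (8 * ε)) • (uu (j + ((n + 1 : ℕ) : Fin 6)) - uu (j + (n : Fin 6)))) :
    (1 / 36 : ℝ) • ∑ n ∈ Finset.range 6, ∑ j : Fin 6, crossProduct (r n j) (p n j)
      = crossProduct ((1 / 6 : ℝ) • ∑ n ∈ Finset.range 6, rt n) (m • v)
        + (ℏ / 2) • ![-1, 1, 1] ∧
    ∀ k : Fin 3,
      |((1 / 36 : ℝ) • ∑ n ∈ Finset.range 6, ∑ j : Fin 6, crossProduct (r n j) (p n j)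
          - crossProduct ((1 / 6 : ℝ) • ∑ n ∈ Finset.range 6, rt n) (m • v)) k| = ℏ / 2 := by
  have hab : Real.sqrt (3 * ℏ * ε / (8 * m)) * Real.sqrt (3 * ℏ * m / (8 * ε)) = 3 * ℏ / 8 := by
    rw [← Real.sqrt_mul (by positivity)]
    have h : 3 * ℏ * ε / (8 * m) * (3 * ℏ * m / (8 * ε)) = (3 * ℏ / 8) ^ 2 := by
      field_simp
    rw [h, Real.sqrt_sq (by positivity)]
  have main : (1 / 36 : ℝ) • ∑ n ∈ Finset.range 6, ∑ j : Fin 6, crossProduct (r n j) (p n j)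
      = crossProduct ((1 / 6 : ℝ) • ∑ n ∈ Finset.range 6, rt n) (m • v)
        + (ℏ / 2) • ![-1, 1, 1] := by
    funext k
    simp only [Finset.sum_range_succ, Finset.sum_range_zero, Fin.sum_univ_six, hr, hp, hrt,
      cross_apply]
    fin_cases k <;>
      simp [uu0, uu1, uu2, uu3, uu4, uu5, Pi.add_apply, Pi.smul_apply, Pi.sub_apply,
        smul_eq_mul, Matrix.cons_val_zero, Matrix.cons_val_one, Matrix.head_cons] <;>
      first
        | linear_combination (-4/3 : ℝ) * hab
        | linear_combination (4/3 : ℝ) * hab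
  refine ⟨main, fun k => ?_⟩
  rw [main, add_sub_cancel_left]
  have h2 : (0:ℝ) ≤ ℏ / 2 := by positivity
  fin_cases k <;> simp [abs_of_nonneg h2]
end

section
/- Let n ≥ 0 be an integer and let w ∈ {−3,−2,−1,0,1,2,3} satisfy n ≡ w (mod 6). Then the standard deviation of the x-coordinate of the positions, (Δx)ₙ = √((1/6)∑_{j=1}^{6} ((rₙʲ − r̃ₙ)·e₁)²), equals √(ℏε|w|/(2m)). -/
/-- if `n ≡ w (mod 6)` with `w ∈ {−3,…,3}`, then the standard
deviation of the x-coordinates of the positions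
`rₙʲ = r̃ₙ + √(3ℏε/(8m))(s₁ⁿuʲ − uʲ)` (with `r̃ₙ = r̃₀ + nεṽ`) equals
`(Δx)ₙ = √(ℏε|w|/(2m))`. -/
theorem stmt7 (ℏ m ε : ℝ) (hℏ : 0 < ℏ) (hm : 0 < m) (hε : 0 < ε)
    (r₀ v : Fin 3 → ℝ)
    (rt : ℕ → Fin 3 → ℝ) (hrt : ∀ n, rt n = r₀ + ((n : ℝ) * ε) • v)
    (r : ℕ → Fin 6 → Fin 3 → ℝ)
    (hr : ∀ (n : ℕ) (j : Fin 6), r n j = rt n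
      + Real.sqrt (3 * ℏ * ε / (8 * m)) • (uu (j + Fin.ofNat 6 n) - uu j))
    (n : ℕ) (w : ℤ) (hw : -3 ≤ w ∧ w ≤ 3) (hmod : (n : ℤ) ≡ w [ZMOD 6]) :
    Real.sqrt ((1 / 6 : ℝ) * ∑ j : Fin 6, ((r n j - rt n) 0) ^ 2)
      = Real.sqrt (ℏ * ε * |(w : ℝ)| / (2 * m)) := by
  set c := Real.sqrt (3 * ℏ * ε / (8 * m)) with hcdef
  have hc : c ^ 2 = 3 * ℏ * ε / (8 * m) := Real.sq_sqrt (by positivity)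
  have hmm : (n : ℤ) % 6 = w % 6 := hmod
  have hn6 : (Fin.ofNat 6 n) = (Fin.ofNat 6 (n % 6)) := by
    exact Fin.ext (by simp [Fin.val_ofNat])
  have hterm : ∀ j : Fin 6, (r n j - rt n) 0 = c * (uu (j + Fin.ofNat 6 n) 0 - uu j 0) := by
    intro j
    simp [hr, add_sub_cancel_left]
  suffices hS : (1 / 6 : ℝ) * ∑ j : Fin 6, ((r n j - rt n) 0) ^ 2
      = ℏ * ε * |(w : ℝ)| / (2 * m) by rw [hS]
  simp only [hterm, hn6]
  have h6 : n % 6 = 0 ∨ n % 6 = 1 ∨ n % 6 = 2 ∨ n % 6 = 3 ∨ n % 6 = 4 ∨ n % 6 = 5 := by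
    omega
  obtain ⟨hw1, hw2⟩ := hw
  rcases h6 with hk | hk | hk | hk | hk | hk <;> rw [hk]
  · have hwv : |(w : ℝ)| = 0 := by
      have hww : w = 0 := by omega
      rw [hww]; norm_num
    rw [hwv, Fin.sum_univ_six]
    simp only [show uu ((0:Fin 6) + (Fin.ofNat 6 0)) 0 = (-1:ℝ) from rfl, show uu (0:Fin 6) 0 = (-1:ℝ) from rfl, show uu ((1:Fin 6) + (Fin.ofNat 6 0)) 0 = (-1:ℝ) from rfl, show uu (1:Fin 6) 0 = (-1:ℝ) from rfl, show uu ((2:Fin 6) + (Fin.ofNat 6 0)) 0 = (1:ℝ) from rfl, show uu (2:Fin 6) 0 = (1:ℝ) from rfl, show uu ((3:Fin 6) + (Fin.ofNat 6 0)) 0 = (1:ℝ) from rfl, show uu (3:Fin 6) 0 = (1:ℝ) from rfl, show uu ((4:Fin 6) + (Fin.ofNat 6 0)) 0 = (1:ℝ) from rfl, show uu (4:Fin 6) 0 = (1:ℝ) from rfl, show uu ((5:Fin 6) + (Fin.ofNat 6 0)) 0 = (-1:ℝ) from rfl, show uu (5:Fin 6) 0 = (-1:ℝ) from rfl]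
    linear_combination (0 : ℝ) * hc
  · have hwv : |(w : ℝ)| = 1 := by
      have hww : w = 1 := by omega
      rw [hww]; norm_num
    rw [hwv, Fin.sum_univ_six]
    simp only [show uu ((0:Fin 6) + (Fin.ofNat 6 1)) 0 = (-1:ℝ) from rfl, show uu (0:Fin 6) 0 = (-1:ℝ) from rfl, show uu ((1:Fin 6) + (Fin.ofNat 6 1)) 0 = (1:ℝ) from rfl, show uu (1:Fin 6) 0 = (-1:ℝ) from rfl, show uu ((2:Fin 6) + (Fin.ofNat 6 1)) 0 = (1:ℝ) from rfl, show uu (2:Fin 6) 0 = (1:ℝ) from rfl, show uu ((3:Fin 6) + (Fin.ofNat 6 1)) 0 = (1:ℝ) from rfl, show uu (3:Fin 6) 0 = (1:ℝ) from rfl, show uu ((4:Fin 6) + (Fin.ofNat 6 1)) 0 = (-1:ℝ) from rfl, show uu (4:Fin 6) 0 = (1:ℝ) from rfl, show uu ((5:Fin 6) + (Fin.ofNat 6 1)) 0 = (-1:ℝ) from rfl, show uu (5:Fin 6) 0 = (-1:ℝ) from rfl]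
    linear_combination (4/3 : ℝ) * hc
  · have hwv : |(w : ℝ)| = 2 := by
      have hww : w = 2 := by omega
      rw [hww]; norm_num
    rw [hwv, Fin.sum_univ_six]
    simp only [show uu ((0:Fin 6) + (Fin.ofNat 6 2)) 0 = (1:ℝ) from rfl, show uu (0:Fin 6) 0 = (-1:ℝ) from rfl, show uu ((1:Fin 6) + (Fin.ofNat 6 2)) 0 = (1:ℝ) from rfl, show uu (1:Fin 6) 0 = (-1:ℝ) from rfl, show uu ((2:Fin 6) + (Fin.ofNat 6 2)) 0 = (1:ℝ) from rfl, show uu (2:Fin 6) 0 = (1:ℝ) from rfl, show uu ((3:Fin 6) + (Fin.ofNat 6 2)) 0 = (-1:ℝ) from rfl, show uu (3:Fin 6) 0 = (1:ℝ) from rfl, show uu ((4:Fin 6) + (Fin.ofNat 6 2)) 0 = (-1:ℝ) from rfl, show uu (4:Fin 6) 0 = (1:ℝ) from rfl, show uu ((5:Fin 6) + (Fin.ofNat 6 2)) 0 = (-1:ℝ) from rfl, show uu (5:Fin 6) 0 = (-1:ℝ) from rfl]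
    linear_combination (8/3 : ℝ) * hc
  · have hwv : |(w : ℝ)| = 3 := by
      have hww : w = 3 ∨ w = -3 := by omega
      rcases hww with h | h <;> rw [h] <;> norm_num
    rw [hwv, Fin.sum_univ_six]
    simp only [show uu ((0:Fin 6) + (Fin.ofNat 6 3)) 0 = (1:ℝ) from rfl, show uu (0:Fin 6) 0 = (-1:ℝ) from rfl, show uu ((1:Fin 6) + (Fin.ofNat 6 3)) 0 = (1:ℝ) from rfl, show uu (1:Fin 6) 0 = (-1:ℝ) from rfl, show uu ((2:Fin 6) + (Fin.ofNat 6 3)) 0 = (-1:ℝ) from rfl, show uu (2:Fin 6) 0 = (1:ℝ) from rfl, show uu ((3:Fin 6) + (Fin.ofNat 6 3)) 0 = (-1:ℝ) from rfl, show uu (3:Fin 6) 0 = (1:ℝ) from rfl, show uu ((4:Fin 6) + (Fin.ofNat 6 3)) 0 = (-1:ℝ) from rfl, show uu (4:Fin 6) 0 = (1:ℝ) from rfl, show uu ((5:Fin 6) + (Fin.ofNat 6 3)) 0 = (1:ℝ) from rfl, show uu (5:Fin 6) 0 = (-1:ℝ) from rfl]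
    linear_combination (4 : ℝ) * hc
  · have hwv : |(w : ℝ)| = 2 := by
      have hww : w = -2 := by omega
      rw [hww]; norm_num
    rw [hwv, Fin.sum_univ_six]
    simp only [show uu ((0:Fin 6) + (Fin.ofNat 6 4)) 0 = (1:ℝ) from rfl, show uu (0:Fin 6) 0 = (-1:ℝ) from rfl, show uu ((1:Fin 6) + (Fin.ofNat 6 4)) 0 = (-1:ℝ) from rfl, show uu (1:Fin 6) 0 = (-1:ℝ) from rfl, show uu ((2:Fin 6) + (Fin.ofNat 6 4)) 0 = (-1:ℝ) from rfl, show uu (2:Fin 6) 0 = (1:ℝ) from rfl, show uu ((3:Fin 6) + (Fin.ofNat 6 4)) 0 = (-1:ℝ) from rfl, show uu (3:Fin 6) 0 = (1:ℝ) from rfl, show uu ((4:Fin 6) + (Fin.ofNat 6 4)) 0 = (1:ℝ) from rfl, show uu (4:Fin 6) 0 = (1:ℝ) from rfl, show uu ((5:Fin 6) + (Fin.ofNat 6 4)) 0 = (1:ℝ) from rfl, show uu (5:Fin 6) 0 = (-1:ℝ) from rfl]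
    linear_combination (8/3 : ℝ) * hc
  · have hwv : |(w : ℝ)| = 1 := by
      have hww : w = -1 := by omega
      rw [hww]; norm_num
    rw [hwv, Fin.sum_univ_six]
    simp only [show uu ((0:Fin 6) + (Fin.ofNat 6 5)) 0 = (-1:ℝ) from rfl, show uu (0:Fin 6) 0 = (-1:ℝ) from rfl, show uu ((1:Fin 6) + (Fin.ofNat 6 5)) 0 = (-1:ℝ) from rfl, show uu (1:Fin 6) 0 = (-1:ℝ) from rfl, show uu ((2:Fin 6) + (Fin.ofNat 6 5)) 0 = (-1:ℝ) from rfl, show uu (2:Fin 6) 0 = (1:ℝ) from rfl, show uu ((3:Fin 6) + (Fin.ofNat 6 5)) 0 = (1:ℝ) from rfl, show uu (3:Fin 6) 0 = (1:ℝ) from rfl, show uu ((4:Fin 6) + (Fin.ofNat 6 5)) 0 = (1:ℝ) from rfl, show uu (4:Fin 6) 0 = (1:ℝ) from rfl, show uu ((5:Fin 6) + (Fin.ofNat 6 5)) 0 = (1:ℝ) from rfl, show uu (5:Fin 6) 0 = (-1:ℝ) from rfl]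
    linear_combination (4/3 : ℝ) * hc
end

section
/- For every integer n ≥ 0, the standard deviation of the x-coordinate of the momenta, (Δpₓ)ₙ = √((1/6)∑_{j=1}^{6} ((pₙʲ − mṽ)·e₁)²), equals √(ℏm/(2ε)). -/
open Fin.NatCast

/-- for every `n`, the standard deviation of the x-coordinates of
the momenta `pₙʲ = mṽ + √(3ℏm/(8ε))(s₁^{n+1}uʲ − s₁ⁿuʲ)` equals
`(Δpₓ)ₙ = √(ℏm/(2ε))`. -/
theorem stmt8 (ℏ m ε : ℝ) (hℏ : 0 < ℏ) (hm : 0 < m) (hε : 0 < ε)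
    (v : Fin 3 → ℝ)
    (p : ℕ → Fin 6 → Fin 3 → ℝ)
    (hp : ∀ (n : ℕ) (j : Fin 6), p n j = m • v
      + Real.sqrt (3 * ℏ * m / (8 * ε)) • (uu (j + ((n + 1 : ℕ) : Fin 6)) - uu (j + (n : Fin 6))))
    (n : ℕ) :
    Real.sqrt ((1 / 6 : ℝ) * ∑ j : Fin 6, ((p n j - m • v) 0) ^ 2)
      = Real.sqrt (ℏ * m / (2 * ε)) := by
  set c := Real.sqrt (3 * ℏ * m / (8 * ε)) with hc
  have hc2 : c ^ 2 = 3 * ℏ * m / (8 * ε) := Real.sq_sqrt (by positivity)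
  have hcast : ((n + 1 : ℕ) : Fin 6) = (n : Fin 6) + 1 := by push_cast; ring
  have hterm : ∀ j : Fin 6, ((p n j - m • v) 0) ^ 2
      = c ^ 2 * (uu (j + (n : Fin 6) + 1) 0 - uu (j + (n : Fin 6)) 0) ^ 2 := by
    intro j
    rw [hp n j, hcast]
    simp [Pi.smul_apply, Pi.sub_apply, mul_pow, add_assoc]
  simp only [hterm]
  have hsum : ∑ j : Fin 6, c ^ 2 * (uu (j + (n : Fin 6) + 1) 0 - uu (j + (n : Fin 6)) 0) ^ 2
      = ∑ j : Fin 6, c ^ 2 * (uu (j + 1) 0 - uu j 0) ^ 2 := by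
    exact Fintype.sum_equiv (Equiv.addRight (n : Fin 6)) _ _ (fun j => rfl)
  rw [hsum]
  congr 1
  rw [Fin.sum_univ_six]
  norm_num [show uu (0+1) 0 = -1 from rfl, show uu (1+1) 0 = 1 from rfl,
    show uu (2+1) 0 = 1 from rfl, show uu (3+1) 0 = 1 from rfl,
    show uu (4+1) 0 = -1 from rfl, show uu (5+1) 0 = -1 from rfl,
    show uu 0 0 = -1 from rfl, show uu 1 0 = -1 from rfl, show uu 2 0 = 1 from rfl,
    show uu 3 0 = 1 from rfl, show uu 4 0 = 1 from rfl, show uu 5 0 = -1 from rfl, show uu 6 0 = -1 from rfl]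
  rw [hc2]
  field_simp
  ring
end

section
/- For every integer n ≥ 0 that is not divisible by 6, the Heisenberg inequality (Δx)ₙ · (Δpₓ)ₙ ≥ ℏ/2 holds, where (Δx)ₙ = √((1/6)∑_{j=1}^{6} ((rₙʲ − r̃ₙ)·e₁)²) and (Δpₓ)ₙ = √((1/6)∑_{j=1}^{6} ((pₙʲ − mṽ)·e₁)²). -/
open Fin.NatCast

lemma uu_vals : uu 0 0 = -1 ∧ uu 1 0 = -1 ∧ uu 2 0 = 1 ∧ uu 3 0 = 1 ∧ uu 4 0 = 1
    ∧ uu 5 0 = -1 ∧ uu 6 0 = -1 ∧ uu 7 0 = -1 ∧ uu 8 0 = 1 ∧ uu 9 0 = 1 ∧ uu 10 0 = 1 ∧ uu 11 0 = -1 :=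
  ⟨rfl, rfl, rfl, rfl, rfl, rfl, rfl, rfl, rfl, rfl, rfl, rfl⟩

lemma fin6_cases (a : Fin 6) (ha : a ≠ 0) :
    a = 1 ∨ a = 2 ∨ a = 3 ∨ a = 4 ∨ a = 5 := by
  revert ha; revert a; decide

lemma sumA (a : Fin 6) (ha : a ≠ 0) :
    (8:ℝ) ≤ ∑ j : Fin 6, (uu (j + a) 0 - uu j 0) ^ 2 := by
  obtain ⟨h0, h1, h2, h3, h4, h5, h6, h7, h8, h9, h10, h11⟩ := uu_vals
  rcases fin6_cases a ha with rfl | rfl | rfl | rfl | rfl <;>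
    simp only [Fin.sum_univ_six, Fin.reduceAdd] <;>
    norm_num [Fin.sum_univ_six, h0, h1, h2, h3, h4, h5, h6, h7, h8, h9, h10, h11]

lemma fin6_cases' (a : Fin 6) :
    a = 0 ∨ a = 1 ∨ a = 2 ∨ a = 3 ∨ a = 4 ∨ a = 5 := by
  revert a; decide

lemma sumP (a : Fin 6) :
    ∑ j : Fin 6, (uu (j + (a + 1)) 0 - uu (j + a) 0) ^ 2 = (8:ℝ) := by
  obtain ⟨h0, h1, h2, h3, h4, h5, h6, h7, h8, h9, h10, h11⟩ := uu_vals
  rcases fin6_cases' a with rfl | rfl | rfl | rfl | rfl | rfl <;>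
    simp only [Fin.sum_univ_six, Fin.reduceAdd] <;>
    norm_num [Fin.sum_univ_six, h0, h1, h2, h3, h4, h5, h6, h7, h8, h9, h10, h11]

/-- for every `n` not divisible by 6 (i.e. at any point not on the
basic trajectory), the Heisenberg inequality `(Δx)ₙ · (Δpₓ)ₙ ≥ ℏ/2` holds for
the process `rₙʲ = r̃ₙ + √(3ℏε/(8m))(s₁ⁿuʲ − uʲ)`,
`pₙʲ = mṽ + √(3ℏm/(8ε))(s₁^{n+1}uʲ − s₁ⁿuʲ)`. -/
theorem stmt9 (ℏ m ε : ℝ) (hℏ : 0 < ℏ) (hm : 0 < m) (hε : 0 < ε)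
    (r₀ v : Fin 3 → ℝ)
    (rt : ℕ → Fin 3 → ℝ) (hrt : ∀ n, rt n = r₀ + ((n : ℝ) * ε) • v)
    (r : ℕ → Fin 6 → Fin 3 → ℝ)
    (hr : ∀ (n : ℕ) (j : Fin 6), r n j = rt n
      + Real.sqrt (3 * ℏ * ε / (8 * m)) • (uu (j + (n : Fin 6)) - uu j))
    (p : ℕ → Fin 6 → Fin 3 → ℝ)
    (hp : ∀ (n : ℕ) (j : Fin 6), p n j = m • v
      + Real.sqrt (3 * ℏ * m / (8 * ε)) • (uu (j + ((n + 1 : ℕ) : Fin 6)) - uu (j + (n : Fin 6))))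
    (n : ℕ) (hn : ¬ (6 ∣ n)) :
    Real.sqrt ((1 / 6 : ℝ) * ∑ j : Fin 6, ((r n j - rt n) 0) ^ 2)
      * Real.sqrt ((1 / 6 : ℝ) * ∑ j : Fin 6, ((p n j - m • v) 0) ^ 2)
      ≥ ℏ / 2 := by
  set a : Fin 6 := (n : Fin 6) with ha
  have hne : a ≠ 0 := by
    rw [ha, Ne, Fin.natCast_eq_zero]
    exact hn
  have hcast : ((n + 1 : ℕ) : Fin 6) = a + 1 := by push_cast; rfl
  have hc2 : Real.sqrt (3 * ℏ * ε / (8 * m)) ^ 2 = 3 * ℏ * ε / (8 * m) :=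
    Real.sq_sqrt (by positivity)
  have hd2 : Real.sqrt (3 * ℏ * m / (8 * ε)) ^ 2 = 3 * ℏ * m / (8 * ε) :=
    Real.sq_sqrt (by positivity)
  have e1 : ∀ j : Fin 6, ((r n j - rt n) 0) ^ 2
      = (3 * ℏ * ε / (8 * m)) * (uu (j + a) 0 - uu j 0) ^ 2 := by
    intro j
    rw [hr]
    simp only [Pi.add_apply, Pi.sub_apply, Pi.smul_apply, smul_eq_mul,
      add_sub_cancel_left]
    rw [mul_pow, hc2]
  have e2 : ∀ j : Fin 6, ((p n j - m • v) 0) ^ 2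
      = (3 * ℏ * m / (8 * ε)) * (uu (j + (a + 1)) 0 - uu (j + a) 0) ^ 2 := by
    intro j
    rw [hp, hcast]
    simp only [Pi.add_apply, Pi.sub_apply, Pi.smul_apply, smul_eq_mul,
      add_sub_cancel_left]
    rw [mul_pow, hd2]
  rw [Finset.sum_congr rfl (fun j _ => e1 j), Finset.sum_congr rfl (fun j _ => e2 j),
    ← Finset.mul_sum, ← Finset.mul_sum, sumP a]
  have hS := sumA a hne
  have h1 : ℏ * ε / (2 * m) ≤ (1 / 6 : ℝ) * ((3 * ℏ * ε / (8 * m)) * ∑ j : Fin 6, (uu (j + a) 0 - uu j 0) ^ 2) := by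
    have key : ℏ * ε / (2 * m) = (1 / 6 : ℝ) * ((3 * ℏ * ε / (8 * m)) * 8) := by ring
    rw [key]
    have hpos : (0:ℝ) < 3 * ℏ * ε / (8 * m) := by positivity
    nlinarith
  have h2 : (1 / 6 : ℝ) * ((3 * ℏ * m / (8 * ε)) * 8) = ℏ * m / (2 * ε) := by ring
  rw [h2]
  calc Real.sqrt ((1 / 6 : ℝ) * ((3 * ℏ * ε / (8 * m)) * ∑ j : Fin 6, (uu (j + a) 0 - uu j 0) ^ 2))
        * Real.sqrt (ℏ * m / (2 * ε))
      ≥ Real.sqrt (ℏ * ε / (2 * m)) * Real.sqrt (ℏ * m / (2 * ε)) := by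
        gcongr
    _ = Real.sqrt ((ℏ * ε / (2 * m)) * (ℏ * m / (2 * ε))) := by
        rw [← Real.sqrt_mul (by positivity)]
    _ = Real.sqrt ((ℏ / 2) ^ 2) := by
        congr 1
        field_simp
    _ = ℏ / 2 := Real.sqrt_sq (by positivity)
end

section
/- Let aₙʲ = rₙʲ − r̃ₙ and bₙʲ = pₙʲ − mṽ be the fluctuation parts of the positions and momenta relative to the basic trajectory. Then the non-temporal commutation relation (1+i)²·(1/36)·∑_{n=0}^{5}∑_{j=1}^{6} [ (b_{n+1}ʲ·e₁)(aₙʲ·e₁) − (a_{n+1}ʲ·e₁)(bₙʲ·e₁) ] = −iℏ holds in ℂ. -/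
open Fin.NatCast

set_option maxHeartbeats 1000000 in
/-- The purely combinatorial part of the computation. -/
lemma stmt10_sum : ∑ n ∈ Finset.range 6, ∑ j : Fin 6,
    ((uu (j + ((n+1+1 : ℕ):Fin 6)) 0 - uu (j + ((n+1 : ℕ):Fin 6)) 0) * (uu (j + ((n:ℕ):Fin 6)) 0 - uu j 0)
    - (uu (j + ((n+1 : ℕ):Fin 6)) 0 - uu j 0) * (uu (j + ((n+1 : ℕ):Fin 6)) 0 - uu (j + ((n:ℕ):Fin 6)) 0)) = -48 := by
  norm_num [Finset.sum_range_succ, Fin.sum_univ_six,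
    show ((0:ℕ):Fin 6) = 0 from rfl, show ((1:ℕ):Fin 6) = 1 from rfl,
    show ((2:ℕ):Fin 6) = 2 from rfl, show ((3:ℕ):Fin 6) = 3 from rfl,
    show ((4:ℕ):Fin 6) = 4 from rfl, show ((5:ℕ):Fin 6) = 5 from rfl,
    show ((6:ℕ):Fin 6) = 0 from rfl, show ((7:ℕ):Fin 6) = 1 from rfl,
    show uu 0 0 = -1 from rfl, show uu 1 0 = -1 from rfl, show uu 2 0 = 1 from rfl,
    show uu 3 0 = 1 from rfl, show uu 4 0 = 1 from rfl, show uu 5 0 = -1 from rfl,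
    show uu 6 0 = -1 from rfl, show uu 7 0 = -1 from rfl, show uu 8 0 = 1 from rfl,
    show uu 9 0 = 1 from rfl, show uu 10 0 = 1 from rfl, show uu 11 0 = -1 from rfl,
    show uu 12 0 = -1 from rfl]

/-- with `aₙʲ = rₙʲ − r̃ₙ = √(3ℏε/(8m))(s₁ⁿuʲ − uʲ)` and
`bₙʲ = pₙʲ − mṽ = √(3ℏm/(8ε))(s₁^{n+1}uʲ − s₁ⁿuʲ)` the fluctuation parts of the
positions and momenta, the non-temporal commutation relation
`(1+i)²·(1/36)·∑_{n=0}^{5}∑_{j=1}^{6} [(b_{n+1}ʲ·e₁)(aₙʲ·e₁) − (a_{n+1}ʲ·e₁)(bₙʲ·e₁)] = −iℏ`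
holds in ℂ. -/
theorem stmt10 (ℏ m ε : ℝ) (hℏ : 0 < ℏ) (hm : 0 < m) (hε : 0 < ε)
    (r₀ v : Fin 3 → ℝ)
    (rt : ℕ → Fin 3 → ℝ) (hrt : ∀ n, rt n = r₀ + ((n : ℝ) * ε) • v)
    (r : ℕ → Fin 6 → Fin 3 → ℝ)
    (hr : ∀ (n : ℕ) (j : Fin 6), r n j = rt n
      + Real.sqrt (3 * ℏ * ε / (8 * m)) • (uu (j + (n : Fin 6)) - uu j))
    (p : ℕ → Fin 6 → Fin 3 → ℝ)
    (hp : ∀ (n : ℕ) (j : Fin 6), p n j = m • v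
      + Real.sqrt (3 * ℏ * m / (8 * ε)) • (uu (j + ((n + 1 : ℕ) : Fin 6)) - uu (j + (n : Fin 6))))
    (a b : ℕ → Fin 6 → Fin 3 → ℝ)
    (ha : ∀ n j, a n j = r n j - rt n)
    (hb : ∀ n j, b n j = p n j - m • v) :
    (1 + Complex.I) ^ 2 * (1 / 36 : ℂ) *
        ∑ n ∈ Finset.range 6, ∑ j : Fin 6,
          (((b (n + 1) j 0 : ℝ) : ℂ) * ((a n j 0 : ℝ) : ℂ)
            - ((a (n + 1) j 0 : ℝ) : ℂ) * ((b n j 0 : ℝ) : ℂ))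
      = -Complex.I * (ℏ : ℂ) := by
  set c := Real.sqrt (3*ℏ*ε/(8*m)) with hc
  set d := Real.sqrt (3*ℏ*m/(8*ε)) with hd
  have hcd : c * d = 3*ℏ/8 := by
    rw [hc, hd, ← Real.sqrt_mul (by positivity)]
    have h : (3*ℏ*ε/(8*m)) * (3*ℏ*m/(8*ε)) = (3*ℏ/8)^2 := by
      field_simp
    rw [h, Real.sqrt_sq (by positivity)]
  have ha' : ∀ (n : ℕ) (j : Fin 6), a n j 0 = c * (uu (j + (n : Fin 6)) 0 - uu j 0) := by
    intro n j; rw [ha, hr]; simp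
  have hb' : ∀ (n : ℕ) (j : Fin 6), b n j 0
      = d * (uu (j + ((n + 1 : ℕ) : Fin 6)) 0 - uu (j + (n : Fin 6)) 0) := by
    intro n j; rw [hb, hp]; simp
  have hfac : ∀ n ∈ Finset.range 6, ∑ j : Fin 6,
      (((b (n + 1) j 0 : ℝ) : ℂ) * ((a n j 0 : ℝ) : ℂ)
        - ((a (n + 1) j 0 : ℝ) : ℂ) * ((b n j 0 : ℝ) : ℂ))
      = ((c : ℂ) * d) * ∑ j : Fin 6,
        (((uu (j + ((n+1+1 : ℕ):Fin 6)) 0 - uu (j + ((n+1 : ℕ):Fin 6)) 0) * (uu (j + ((n:ℕ):Fin 6)) 0 - uu j 0)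
          - (uu (j + ((n+1 : ℕ):Fin 6)) 0 - uu j 0) * (uu (j + ((n+1 : ℕ):Fin 6)) 0 - uu (j + ((n:ℕ):Fin 6)) 0) : ℝ) : ℂ) := by
    intro n _
    rw [Finset.mul_sum]
    refine Finset.sum_congr rfl fun j _ => ?_
    rw [ha', ha', hb', hb']
    push_cast
    ring
  rw [Finset.sum_congr rfl hfac, ← Finset.mul_sum]
  have hS : (∑ n ∈ Finset.range 6, ∑ j : Fin 6,
      (((uu (j + ((n+1+1 : ℕ):Fin 6)) 0 - uu (j + ((n+1 : ℕ):Fin 6)) 0) * (uu (j + ((n:ℕ):Fin 6)) 0 - uu j 0)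
        - (uu (j + ((n+1 : ℕ):Fin 6)) 0 - uu j 0) * (uu (j + ((n+1 : ℕ):Fin 6)) 0 - uu (j + ((n:ℕ):Fin 6)) 0) : ℝ) : ℂ))
      = (-48 : ℂ) := by
    exact_mod_cast congrArg (fun x : ℝ => (x : ℂ)) stmt10_sum
  rw [hS]
  have hcd' : ((c : ℂ)) * ((d : ℂ)) = ((3*ℏ/8 : ℝ) : ℂ) := by
    rw [← Complex.ofReal_mul, hcd]
  rw [hcd']
  push_cast
  ring_nf
  simp [Complex.I_sq]
end

section
/- Let f : ℂⁿ → ℂ be holomorphic and convex in the complex minplus sense, meaning that for every fixed y ∈ ℝⁿ the map x ↦ Re f(x + iy) is convex on ℝⁿ and for every fixed x ∈ ℝⁿ the map y ↦ Re f(x + iy) is concave on ℝⁿ. If the complex derivative of f vanishes at z₀ = x₀ + iy₀, then z₀ is a complex minimum of f, i.e. Re f(x₀ + iy) ≤ Re f(x₀ + iy₀) ≤ Re f(x + iy₀) for all x, y ∈ ℝⁿ. -/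
open Complex

/-- A convex function on `ℝ` with zero derivative at `0` attains its minimum at `0`. -/
lemma convex_min_of_deriv_zero {g : ℝ → ℝ} (hg : ConvexOn ℝ Set.univ g)
    (hd : HasDerivAt g 0 0) (t : ℝ) : g 0 ≤ g t := by
  rcases lt_trichotomy t 0 with ht | ht | ht
  · have h1 : slope g t 0 ≤ 0 := hg.slope_le_of_hasDerivAt (Set.mem_univ t) (Set.mem_univ 0) ht hd
    rw [slope_def_field, div_le_iff₀ (by linarith)] at h1
    linarith
  · simp [ht]
  · have h1 : (0 : ℝ) ≤ slope g 0 t := hg.le_slope_of_hasDerivAt (Set.mem_univ 0) (Set.mem_univ t) ht hd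
    rw [slope_def_field, le_div_iff₀ (by linarith)] at h1
    linarith

/-- One-sided key lemma: if the real-linear derivative of `f` at `z₀` vanishes and the
curve `t ↦ z₀ + t • v` is considered, then `t ↦ (f (z₀ + t • v)).re` has derivative `0`. -/
lemma hasDerivAt_re_line {n : ℕ} {f : (Fin n → ℂ) → ℂ} (hf : Differentiable ℂ f)
    {z₀ : Fin n → ℂ} (hderiv : fderiv ℂ f z₀ = 0) (v : Fin n → ℂ) :
    HasDerivAt (fun t : ℝ => (f (z₀ + t • v)).re) 0 0 := by
  have hc : HasDerivAt (fun t : ℝ => z₀ + t • v) v 0 := by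
    simpa using ((hasDerivAt_id (0 : ℝ)).smul_const v).const_add z₀
  have hff : HasFDerivAt f ((fderiv ℂ f z₀).restrictScalars ℝ) z₀ :=
    ((hf z₀).hasFDerivAt).restrictScalars ℝ
  have hcomp : HasDerivAt (fun t : ℝ => f (z₀ + t • v))
      (((fderiv ℂ f z₀).restrictScalars ℝ) v) 0 := by
    have := hff.comp_hasDerivAt_of_eq (0 : ℝ) hc (by simp)
    simpa [Function.comp_def] using this
  have hre := Complex.reCLM.hasFDerivAt.comp_hasDerivAt (0 : ℝ) hcomp
  simpa [Function.comp_def, hderiv] using hre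

/-- if `f : ℂⁿ → ℂ` is holomorphic and convex in the complex
minplus sense (`x ↦ Re f(x+iy)` convex for each fixed `y`, `y ↦ Re f(x+iy)`
concave for each fixed `x`), and the complex derivative of `f` vanishes at
`z₀ = x₀ + iy₀`, then `z₀` is a complex minimum of `f`:
`Re f(x₀+iy) ≤ Re f(x₀+iy₀) ≤ Re f(x+iy₀)` for all `x, y ∈ ℝⁿ`. -/
theorem stmt15 {n : ℕ} (f : (Fin n → ℂ) → ℂ) (hf : Differentiable ℂ f)
    (hconv : ∀ y : Fin n → ℝ, ConvexOn ℝ Set.univ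
      (fun x : Fin n → ℝ => (f fun k => (x k : ℂ) + (y k : ℂ) * Complex.I).re))
    (hconc : ∀ x : Fin n → ℝ, ConcaveOn ℝ Set.univ
      (fun y : Fin n → ℝ => (f fun k => (x k : ℂ) + (y k : ℂ) * Complex.I).re))
    (x₀ y₀ : Fin n → ℝ)
    (hderiv : fderiv ℂ f (fun k => (x₀ k : ℂ) + (y₀ k : ℂ) * Complex.I) = 0) :
    ∀ x y : Fin n → ℝ,
      (f fun k => (x₀ k : ℂ) + (y k : ℂ) * Complex.I).re
          ≤ (f fun k => (x₀ k : ℂ) + (y₀ k : ℂ) * Complex.I).re ∧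
      (f fun k => (x₀ k : ℂ) + (y₀ k : ℂ) * Complex.I).re
          ≤ (f fun k => (x k : ℂ) + (y₀ k : ℂ) * Complex.I).re := by
  intro x y
  set z₀ : Fin n → ℂ := fun k => (x₀ k : ℂ) + (y₀ k : ℂ) * Complex.I with hz₀
  constructor
  · -- concave direction: P(x₀, y) ≤ P(x₀, y₀)
    set g : ℝ → ℝ := fun t =>
      (f fun k => (x₀ k : ℂ) + ((AffineMap.lineMap y₀ y t k : ℝ) : ℂ) * Complex.I).re with hg
    have hgconv : ConvexOn ℝ Set.univ (fun t => -(g t)) := by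
      have h := ((hconc x₀).neg).comp_affineMap (AffineMap.lineMap y₀ y : ℝ →ᵃ[ℝ] (Fin n → ℝ))
      simpa [Function.comp_def, hg] using h
    have hgeq : g = fun t : ℝ => (f (z₀ + t • fun k => ((y k : ℂ) - (y₀ k : ℂ)) * Complex.I)).re := by
      funext t
      simp only [hg]
      have harg : (fun k => (x₀ k : ℂ) + ((AffineMap.lineMap y₀ y t k : ℝ) : ℂ) * Complex.I)
          = z₀ + t • fun k => ((y k : ℂ) - (y₀ k : ℂ)) * Complex.I := by
        funext k
        simp only [hz₀, Pi.add_apply, Pi.smul_apply, AffineMap.lineMap_apply, smul_eq_mul,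
          Pi.sub_apply, vadd_eq_add, vsub_eq_sub, Complex.real_smul]
        push_cast
        ring
      rw [harg]
    have hgd : HasDerivAt g 0 0 := by
      rw [hgeq]; exact hasDerivAt_re_line hf hderiv _
    have hmin := convex_min_of_deriv_zero hgconv (by simpa [Pi.neg_def] using hgd.neg) 1
    have h0 : g 0 = (f z₀).re := by simp [hg, hz₀]
    have h1 : g 1 = (f fun k => (x₀ k : ℂ) + (y k : ℂ) * Complex.I).re := by simp [hg]
    simp only [neg_le_neg_iff] at hmin
    rw [h0, h1] at hmin
    simpa [hz₀] using hmin
  · -- convex direction: P(x₀, y₀) ≤ P(x, y₀)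
    set g : ℝ → ℝ := fun t =>
      (f fun k => ((AffineMap.lineMap x₀ x t k : ℝ) : ℂ) + (y₀ k : ℂ) * Complex.I).re with hg
    have hgconv : ConvexOn ℝ Set.univ g := by
      have h := (hconv y₀).comp_affineMap (AffineMap.lineMap x₀ x : ℝ →ᵃ[ℝ] (Fin n → ℝ))
      simpa [Function.comp_def, hg] using h
    have hgeq : g = fun t : ℝ => (f (z₀ + t • fun k => ((x k : ℂ) - (x₀ k : ℂ)))).re := by
      funext t
      simp only [hg]
      have harg : (fun k => ((AffineMap.lineMap x₀ x t k : ℝ) : ℂ) + (y₀ k : ℂ) * Complex.I)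
          = z₀ + t • fun k => ((x k : ℂ) - (x₀ k : ℂ)) := by
        funext k
        simp only [hz₀, Pi.add_apply, Pi.smul_apply, AffineMap.lineMap_apply, smul_eq_mul,
          Pi.sub_apply, vadd_eq_add, vsub_eq_sub, Complex.real_smul]
        push_cast
        ring
      rw [harg]
    have hgd : HasDerivAt g 0 0 := by
      rw [hgeq]; exact hasDerivAt_re_line hf hderiv _
    have hmin := convex_min_of_deriv_zero hgconv hgd 1
    have h0 : g 0 = (f z₀).re := by simp [hg, hz₀]
    have h1 : g 1 = (f fun k => (x k : ℂ) + (y₀ k : ℂ) * Complex.I).re := by simp [hg]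
    rw [h0, h1] at hmin
    simpa [hz₀] using hmin
end

section
/- Fix ℏ > 0, m > 0, let V : ℝ³ → ℝ, let ρ : ℝ³ × ℝ → ℝ be everywhere positive and S₀ : ℝ³ × ℝ → ℝ, both twice continuously differentiable in x and continuously differentiable in t. If the wave function Ψ = √ρ · exp(iS₀/ℏ) satisfies the Schrödinger equation iℏ·∂Ψ/∂t = −(ℏ²/(2m))·ΔΨ + V(x)·Ψ on ℝ³ × ℝ, then the probability density satisfies the Madelung continuity equation ∂ρ/∂t + div(ρ·∇S₀/m) = 0 on ℝ³ × ℝ. -/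
set_option maxHeartbeats 1000000
open Complex

noncomputable section

lemma psi_fderiv {ℏ : ℝ} (hℏ : ℏ ≠ 0) {f g : (Fin 3 → ℝ) → ℝ}
    (hf : Differentiable ℝ f) (hg : Differentiable ℝ g) (hpos : ∀ y, 0 < f y)
    (y v : Fin 3 → ℝ) :
    fderiv ℝ (fun w => ((Real.sqrt (f w) : ℝ) : ℂ) * Complex.exp (Complex.I * (g w) / (ℏ:ℂ))) y v
      = ((fderiv ℝ f y v / (2 * Real.sqrt (f y)) : ℝ)
          + (Real.sqrt (f y) : ℝ) * (Complex.I * (fderiv ℝ g y v : ℝ) / (ℏ:ℂ)))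
        * Complex.exp (Complex.I * (g y) / (ℏ:ℂ)) := by
  have hfy : HasFDerivAt f (fderiv ℝ f y) y := (hf y).hasFDerivAt
  have hgy : HasFDerivAt g (fderiv ℝ g y) y := (hg y).hasFDerivAt
  have h1 : HasFDerivAt (fun w => ((Real.sqrt (f w) : ℝ) : ℂ))
      (Complex.ofRealCLM.comp ((1 / (2 * Real.sqrt (f y))) • fderiv ℝ f y)) y :=
    Complex.ofRealCLM.hasFDerivAt.comp y (hfy.sqrt (hpos y).ne')
  have h2 : HasFDerivAt (fun w => ((g w : ℝ) : ℂ))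
      (Complex.ofRealCLM.comp (fderiv ℝ g y)) y :=
    Complex.ofRealCLM.hasFDerivAt.comp y hgy
  have h3 : HasFDerivAt (fun w => Complex.I * ((g w : ℝ) : ℂ) / (ℏ:ℂ))
      ((Complex.I / (ℏ:ℂ)) • (Complex.ofRealCLM.comp (fderiv ℝ g y))) y := by
    have h := h2.const_mul (Complex.I / (ℏ:ℂ))
    have : (fun w => Complex.I * ((g w : ℝ) : ℂ) / (ℏ:ℂ))
        = fun w => (Complex.I / (ℏ:ℂ)) * ((g w : ℝ) : ℂ) := by
      funext w; ring
    rw [this]; exact h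
  have h4 := h3.cexp
  have H : HasFDerivAt (fun w => ((Real.sqrt (f w) : ℝ) : ℂ) * Complex.exp (Complex.I * (g w) / (ℏ:ℂ))) _ y := h1.mul h4
  rw [H.fderiv]
  simp only [ContinuousLinearMap.add_apply, ContinuousLinearMap.smul_apply,
    ContinuousLinearMap.comp_apply, Complex.ofRealCLM_apply, ContinuousLinearMap.coe_smul',
    Pi.smul_apply, smul_eq_mul]
  push_cast
  ring

noncomputable section

lemma ofReal_comp_hasFDerivAt {E : Type*} [NormedAddCommGroup E] [NormedSpace ℝ E]
    {f : E → ℝ} {f' : E →L[ℝ] ℝ} {x : E} (h : HasFDerivAt f f' x) :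
    HasFDerivAt (fun y => ((f y : ℝ) : ℂ)) (Complex.ofRealCLM.comp f') x :=
  Complex.ofRealCLM.hasFDerivAt.comp x h

lemma psi_fderiv2 {ℏ : ℝ} (hℏ : ℏ ≠ 0) {f g : (Fin 3 → ℝ) → ℝ}
    (hf : ContDiff ℝ 2 f) (hg : ContDiff ℝ 2 g) (hpos : ∀ y, 0 < f y)
    (x v : Fin 3 → ℝ) :
    fderiv ℝ (fun y =>
        (((fderiv ℝ f y v / (2 * Real.sqrt (f y)) : ℝ) : ℂ)
          + (Real.sqrt (f y) : ℝ) * (Complex.I * (fderiv ℝ g y v : ℝ) / (ℏ:ℂ)))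
        * Complex.exp (Complex.I * (g y) / (ℏ:ℂ))) x v
    = ((((fderiv ℝ (fun y => fderiv ℝ f y v) x v) / (2 * Real.sqrt (f x))
          - (fderiv ℝ f x v)^2 / (4 * (Real.sqrt (f x))^3)
          - Real.sqrt (f x) * (fderiv ℝ g x v)^2 / ℏ^2 : ℝ) : ℂ)
        + (((fderiv ℝ f x v) * (fderiv ℝ g x v) / (Real.sqrt (f x) * ℏ)
            + Real.sqrt (f x) * (fderiv ℝ (fun y => fderiv ℝ g y v) x v) / ℏ : ℝ) : ℂ)
          * Complex.I)
      * Complex.exp (Complex.I * (g x) / (ℏ:ℂ)) := by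
  have hfd : Differentiable ℝ f := hf.differentiable (by norm_num)
  have hgd : Differentiable ℝ g := hg.differentiable (by norm_num)
  have hp : ContDiff ℝ 1 (fun y => fderiv ℝ f y v) :=
    (hf.fderiv_right (le_refl 2)).clm_apply contDiff_const
  have hq : ContDiff ℝ 1 (fun y => fderiv ℝ g y v) :=
    (hg.fderiv_right (le_refl 2)).clm_apply contDiff_const
  have hpx : HasFDerivAt (fun y => fderiv ℝ f y v)
      (fderiv ℝ (fun y => fderiv ℝ f y v) x) x :=
    ((hp.differentiable one_ne_zero) x).hasFDerivAt
  have hqx : HasFDerivAt (fun y => fderiv ℝ g y v)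
      (fderiv ℝ (fun y => fderiv ℝ g y v) x) x :=
    ((hq.differentiable one_ne_zero) x).hasFDerivAt
  have hfx : HasFDerivAt f (fderiv ℝ f x) x := (hfd x).hasFDerivAt
  have hgx : HasFDerivAt g (fderiv ℝ g x) x := (hgd x).hasFDerivAt
  have hsq : HasFDerivAt (fun y => Real.sqrt (f y))
      ((1 / (2 * Real.sqrt (f x))) • fderiv ℝ f x) x := hfx.sqrt (hpos x).ne'
  have hden : HasFDerivAt (fun y => 2 * Real.sqrt (f y))
      ((2:ℝ) • ((1 / (2 * Real.sqrt (f x))) • fderiv ℝ f x)) x := hsq.const_mul 2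
  have hsqpos : 0 < Real.sqrt (f x) := Real.sqrt_pos.mpr (hpos x)
  have hdenne : 2 * Real.sqrt (f x) ≠ 0 := by positivity
  have hinv : HasFDerivAt (fun y => (2 * Real.sqrt (f y))⁻¹)
      ((-((2 * Real.sqrt (f x)) ^ 2)⁻¹) • ((2:ℝ) • ((1 / (2 * Real.sqrt (f x))) • fderiv ℝ f x))) x :=
    (hasDerivAt_inv hdenne).comp_hasFDerivAt x hden
  have ht1' : HasFDerivAt (fun y => fderiv ℝ f y v * (2 * Real.sqrt (f y))⁻¹) _ x := hpx.mul hinv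
  have e : (fun y => fderiv ℝ f y v * (2 * Real.sqrt (f y))⁻¹)
      = fun y => fderiv ℝ f y v / (2 * Real.sqrt (f y)) := by
    funext y; rw [div_eq_mul_inv]
  rw [e] at ht1'
  have ht1 := ht1'
  have ht1c := ofReal_comp_hasFDerivAt ht1
  -- t2
  have hsqc := ofReal_comp_hasFDerivAt hsq
  have hqc := ofReal_comp_hasFDerivAt hqx
  have hq2' := hqc.const_mul (Complex.I / (ℏ:ℂ))
  have e2 : (fun y => (Complex.I / (ℏ:ℂ)) * ((fderiv ℝ g y v : ℝ) : ℂ))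
      = fun y => Complex.I * ((fderiv ℝ g y v : ℝ) : ℂ) / (ℏ:ℂ) := by funext y; ring
  rw [e2] at hq2'
  have hq2 := hq2'
  have ht2 : HasFDerivAt (fun y => ((Real.sqrt (f y) : ℝ) : ℂ) * (Complex.I * ((fderiv ℝ g y v : ℝ) : ℂ) / (ℏ:ℂ))) _ x := hsqc.mul hq2
  have hsum : HasFDerivAt (fun y => (((fderiv ℝ f y v / (2 * Real.sqrt (f y)) : ℝ) : ℂ)
          + (Real.sqrt (f y) : ℝ) * (Complex.I * (fderiv ℝ g y v : ℝ) / (ℏ:ℂ)))) _ x := ht1c.add ht2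
  -- exp part
  have hgc := ofReal_comp_hasFDerivAt hgx
  have hexp' := (hgc.const_mul (Complex.I / (ℏ:ℂ))).cexp
  have e3 : (fun y => Complex.exp ((Complex.I / (ℏ:ℂ)) * ((g y : ℝ) : ℂ)))
      = fun y => Complex.exp (Complex.I * ((g y : ℝ):ℂ) / (ℏ:ℂ)) := by
    funext y; congr 1; ring
  rw [e3] at hexp'
  have hexp := hexp'
  have H : HasFDerivAt (fun y => ((((fderiv ℝ f y v / (2 * Real.sqrt (f y)) : ℝ) : ℂ)
          + (Real.sqrt (f y) : ℝ) * (Complex.I * (fderiv ℝ g y v : ℝ) / (ℏ:ℂ)))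
        * Complex.exp (Complex.I * (g y) / (ℏ:ℂ)))) _ x := hsum.mul hexp
  rw [H.fderiv]
  simp only [ContinuousLinearMap.add_apply, ContinuousLinearMap.smul_apply,
    ContinuousLinearMap.comp_apply, Complex.ofRealCLM_apply, ContinuousLinearMap.coe_smul',
    Pi.smul_apply, smul_eq_mul]
  push_cast
  have hI : (Complex.I * Complex.I : ℂ) = -1 := Complex.I_mul_I
  have hsqne : (Real.sqrt (f x) : ℂ) ≠ 0 := by
    simp [Real.sqrt_ne_zero', hpos x]
  have hℏc : (ℏ:ℂ) ≠ 0 := by exact_mod_cast hℏ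
  ring_nf
  rw [Complex.I_sq]
  ring

noncomputable section

lemma psi_deriv_t {ℏ : ℝ} (hℏ : ℏ ≠ 0) {f g : ℝ → ℝ}
    (hf : ContDiff ℝ 1 f) (hg : ContDiff ℝ 1 g) (hpos : ∀ τ, 0 < f τ) (t : ℝ) :
    deriv (fun τ => ((Real.sqrt (f τ) : ℝ) : ℂ) * Complex.exp (Complex.I * (g τ) / (ℏ:ℂ))) t
      = (((deriv f t / (2 * Real.sqrt (f t)) : ℝ) : ℂ)
          + ((Real.sqrt (f t) * deriv g t / ℏ : ℝ) : ℂ) * Complex.I)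
        * Complex.exp (Complex.I * (g t) / (ℏ:ℂ)) := by
  have hft : HasDerivAt f (deriv f t) t := ((hf.differentiable one_ne_zero) t).hasDerivAt
  have hgt : HasDerivAt g (deriv g t) t := ((hg.differentiable one_ne_zero) t).hasDerivAt
  have hsq : HasDerivAt (fun τ => Real.sqrt (f τ)) (1 / (2 * Real.sqrt (f t)) * deriv f t) t :=
    (Real.hasDerivAt_sqrt (hpos t).ne').comp t hft
  have hsqc := hsq.ofReal_comp
  have hgc := hgt.ofReal_comp
  have hexp' := (hgc.const_mul (Complex.I / (ℏ:ℂ))).cexp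
  have e3 : (fun τ => Complex.exp ((Complex.I / (ℏ:ℂ)) * ((g τ : ℝ) : ℂ)))
      = fun τ => Complex.exp (Complex.I * ((g τ : ℝ):ℂ) / (ℏ:ℂ)) := by
    funext τ; congr 1; ring
  rw [e3] at hexp'
  have H : HasDerivAt (fun τ => ((Real.sqrt (f τ) : ℝ) : ℂ) * Complex.exp (Complex.I * (g τ) / (ℏ:ℂ))) _ t := hsqc.mul hexp'
  rw [H.deriv]
  push_cast
  ring



/-- if `ρ > 0` and `S₀` (both C² in `x`, C¹ in `t`) are such that
the wave function `Ψ = √ρ · exp(iS₀/ℏ)` satisfies the Schrödinger equation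
`iℏ ∂Ψ/∂t = −(ℏ²/(2m))ΔΨ + V(x)Ψ` on ℝ³ × ℝ, then the probability density
satisfies the Madelung continuity equation `∂ρ/∂t + div(ρ∇S₀/m) = 0` on ℝ³ × ℝ. -/
theorem stmt18 (ℏ m : ℝ) (hℏ : 0 < ℏ) (hm : 0 < m)
    (V : (Fin 3 → ℝ) → ℝ)
    (ρ : (Fin 3 → ℝ) → ℝ → ℝ) (S₀ : (Fin 3 → ℝ) → ℝ → ℝ)
    (hρpos : ∀ x t, 0 < ρ x t)
    (hρx : ∀ t : ℝ, ContDiff ℝ 2 (fun x => ρ x t))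
    (hρt : ∀ x : Fin 3 → ℝ, ContDiff ℝ 1 (fun t => ρ x t))
    (hSx : ∀ t : ℝ, ContDiff ℝ 2 (fun x => S₀ x t))
    (hSt : ∀ x : Fin 3 → ℝ, ContDiff ℝ 1 (fun t => S₀ x t))
    (Ψ : (Fin 3 → ℝ) → ℝ → ℂ)
    (hΨ : ∀ x t, Ψ x t = (Real.sqrt (ρ x t) : ℂ) * Complex.exp (Complex.I * S₀ x t / (ℏ : ℂ)))
    (hSch : ∀ (x : Fin 3 → ℝ) (t : ℝ),
      Complex.I * (ℏ : ℂ) * deriv (fun τ => Ψ x τ) t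
        = -((ℏ : ℂ) ^ 2 / (2 * (m : ℂ))) *
            ∑ k : Fin 3, fderiv ℝ
              (fun y => fderiv ℝ (fun w => Ψ w t) y (Pi.single k 1)) x (Pi.single k 1)
          + (V x : ℂ) * Ψ x t) :
    ∀ (x : Fin 3 → ℝ) (t : ℝ),
      deriv (fun τ => ρ x τ) t
        + ∑ k : Fin 3, fderiv ℝ
            (fun y => ρ y t * fderiv ℝ (fun w => S₀ w t) y (Pi.single k 1) / m)
            x (Pi.single k 1)
      = 0 := by
  intro x t
  have hℏ' : ℏ ≠ 0 := hℏ.ne'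
  have hm' : m ≠ 0 := hm.ne'
  set f : (Fin 3 → ℝ) → ℝ := fun y => ρ y t with hf
  set g : (Fin 3 → ℝ) → ℝ := fun y => S₀ y t with hg
  have hposx : ∀ y, 0 < f y := fun y => hρpos y t
  set sq : ℝ := Real.sqrt (f x) with hsq
  have hsqpos : 0 < sq := Real.sqrt_pos.mpr (hposx x)
  have hsqr : sq * sq = f x := Real.mul_self_sqrt (hposx x).le
  set E : ℂ := Complex.exp (Complex.I * (g x) / (ℏ:ℂ)) with hE
  set ρt : ℝ := deriv (fun τ => ρ x τ) t with hρt'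
  set St : ℝ := deriv (fun τ => S₀ x τ) t with hSt'
  set ρ1 : Fin 3 → ℝ := fun k => fderiv ℝ f x (Pi.single k 1) with hρ1
  set s1 : Fin 3 → ℝ := fun k => fderiv ℝ g x (Pi.single k 1) with hs1
  set ρ2 : Fin 3 → ℝ := fun k =>
    fderiv ℝ (fun y => fderiv ℝ f y (Pi.single k 1)) x (Pi.single k 1) with hρ2
  set s2 : Fin 3 → ℝ := fun k =>
    fderiv ℝ (fun y => fderiv ℝ g y (Pi.single k 1)) x (Pi.single k 1) with hs2
  -- time derivative of Ψ at (x, t)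
  have hΨt : deriv (fun τ => Ψ x τ) t
      = (((ρt / (2 * sq) : ℝ) : ℂ) + ((sq * St / ℏ : ℝ) : ℂ) * Complex.I) * E := by
    have e : (fun τ => Ψ x τ)
        = fun τ => ((Real.sqrt (ρ x τ) : ℝ) : ℂ)
            * Complex.exp (Complex.I * (S₀ x τ) / (ℏ:ℂ)) := by
      funext τ; exact hΨ x τ
    rw [e]
    exact psi_deriv_t hℏ' (hρt x) (hSt x) (fun τ => hρpos x τ) t
  -- spatial second derivatives of Ψ
  have hΨxx : ∀ k : Fin 3,
      fderiv ℝ (fun y => fderiv ℝ (fun w => Ψ w t) y (Pi.single k 1)) x (Pi.single k 1)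
      = (((ρ2 k / (2 * sq) - (ρ1 k)^2 / (4 * sq^3) - sq * (s1 k)^2 / ℏ^2 : ℝ) : ℂ)
          + ((ρ1 k * s1 k / (sq * ℏ) + sq * s2 k / ℏ : ℝ) : ℂ) * Complex.I) * E := by
    intro k
    have e1 : (fun w => Ψ w t)
        = fun w => ((Real.sqrt (f w) : ℝ) : ℂ)
            * Complex.exp (Complex.I * (g w) / (ℏ:ℂ)) := by
      funext w; exact hΨ w t
    have e2 : (fun y => fderiv ℝ (fun w => Ψ w t) y (Pi.single k 1))
        = fun y => (((fderiv ℝ f y (Pi.single k 1) / (2 * Real.sqrt (f y)) : ℝ) : ℂ)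
            + ((Real.sqrt (f y) : ℝ) : ℂ)
              * (Complex.I * ((fderiv ℝ g y (Pi.single k 1) : ℝ) : ℂ) / (ℏ:ℂ)))
          * Complex.exp (Complex.I * (g y) / (ℏ:ℂ)) := by
      funext y
      rw [e1]
      exact psi_fderiv hℏ' ((hρx t).differentiable (by norm_num))
        ((hSx t).differentiable (by norm_num)) hposx y (Pi.single k 1)
    rw [e2, psi_fderiv2 hℏ' (hρx t) (hSx t) hposx x (Pi.single k 1)]
  -- plug into the Schrödinger equation
  have hschx := hSch x t
  rw [hΨt, hΨ x t, Finset.sum_congr rfl (fun k _ => hΨxx k)] at hschx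
  set C : ℝ := ∑ k : Fin 3, (ρ2 k / (2 * sq) - (ρ1 k)^2 / (4 * sq^3) - sq * (s1 k)^2 / ℏ^2)
    with hC
  set D : ℝ := ∑ k : Fin 3, (ρ1 k * s1 k / (sq * ℏ) + sq * s2 k / ℏ) with hD
  have hsumE : ∑ k : Fin 3,
      ((((ρ2 k / (2 * sq) - (ρ1 k)^2 / (4 * sq^3) - sq * (s1 k)^2 / ℏ^2 : ℝ) : ℂ)
        + ((ρ1 k * s1 k / (sq * ℏ) + sq * s2 k / ℏ : ℝ) : ℂ) * Complex.I) * E)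
      = (((C : ℝ) : ℂ) + ((D : ℝ) : ℂ) * Complex.I) * E := by
    rw [← Finset.sum_mul, hC, hD]
    push_cast
    rw [Finset.sum_add_distrib, Finset.sum_mul]
  rw [hsumE] at hschx
  have key : Complex.I * (ℏ:ℂ) * (((ρt / (2 * sq) : ℝ) : ℂ) + ((sq * St / ℏ : ℝ) : ℂ) * Complex.I)
      = ((-(ℏ^2/(2*m)) : ℝ) : ℂ) * (((C : ℝ) : ℂ) + ((D : ℝ) : ℂ) * Complex.I)
        + ((V x : ℝ) : ℂ) * ((Real.sqrt (ρ x t) : ℝ) : ℂ) := by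
    apply mul_right_cancel₀ (Complex.exp_ne_zero (Complex.I * (g x) / (ℏ:ℂ)))
    rw [hE] at hschx
    push_cast at hschx ⊢
    linear_combination hschx
  have him := congrArg Complex.im key
  simp only [Complex.add_im, Complex.add_re, Complex.mul_im, Complex.mul_re, Complex.I_re,
    Complex.I_im, Complex.ofReal_re, Complex.ofReal_im, mul_zero, zero_mul, mul_one, one_mul,
    add_zero, zero_add, sub_zero, zero_sub, neg_zero, neg_neg] at him
  -- him : ℏ * (ρt / (2 * sq)) = -(ℏ^2/(2*m)) * D  (up to arrangement)
  -- divergence terms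
  have hdiv : ∀ k : Fin 3,
      fderiv ℝ (fun y => ρ y t * fderiv ℝ (fun w => S₀ w t) y (Pi.single k 1) / m)
        x (Pi.single k 1)
      = (ρ1 k * s1 k + f x * s2 k) / m := by
    intro k
    have hfd : Differentiable ℝ f := (hρx t).differentiable (by norm_num)
    have hq : ContDiff ℝ 1 (fun y => fderiv ℝ g y (Pi.single k 1)) :=
      ((hSx t).fderiv_right (le_refl 2)).clm_apply contDiff_const
    have hqx : HasFDerivAt (fun y => fderiv ℝ g y (Pi.single k 1))
        (fderiv ℝ (fun y => fderiv ℝ g y (Pi.single k 1)) x) x :=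
      ((hq.differentiable one_ne_zero) x).hasFDerivAt
    have hfx : HasFDerivAt f (fderiv ℝ f x) x := (hfd x).hasFDerivAt
    have H : HasFDerivAt (fun y => f y * fderiv ℝ g y (Pi.single k 1) * m⁻¹) _ x := (hfx.mul hqx).mul_const m⁻¹
    have e : (fun y => f y * fderiv ℝ g y (Pi.single k 1) * m⁻¹)
        = fun y => ρ y t * fderiv ℝ (fun w => S₀ w t) y (Pi.single k 1) / m := by
      funext y; rw [div_eq_mul_inv]
    rw [e] at H
    rw [H.fderiv]
    simp only [ContinuousLinearMap.smul_apply, ContinuousLinearMap.add_apply,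
      ContinuousLinearMap.coe_smul', Pi.smul_apply, smul_eq_mul]
    field_simp
    ring
  rw [Finset.sum_congr rfl (fun k _ => hdiv k)]
  -- reduce the sums
  have hDval : D = (∑ k : Fin 3, ρ1 k * s1 k) / (sq * ℏ) + sq * (∑ k : Fin 3, s2 k) / ℏ := by
    have h1 : (∑ k : Fin 3, ρ1 k * s1 k) / (sq * ℏ) = ∑ k : Fin 3, ρ1 k * s1 k / (sq * ℏ) :=
      Finset.sum_div _ _ _
    have h2 : sq * (∑ k : Fin 3, s2 k) / ℏ = ∑ k : Fin 3, sq * s2 k / ℏ := by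
      rw [Finset.mul_sum, Finset.sum_div]
    rw [hD, Finset.sum_add_distrib, h1, h2]
  have hgoalsum : ∑ k : Fin 3, (ρ1 k * s1 k + f x * s2 k) / m
      = ((∑ k : Fin 3, ρ1 k * s1 k) + f x * (∑ k : Fin 3, s2 k)) / m := by
    rw [← Finset.sum_div, Finset.sum_add_distrib, Finset.mul_sum]
  rw [hgoalsum]
  set u : ℝ := ∑ k : Fin 3, ρ1 k * s1 k
  set w : ℝ := ∑ k : Fin 3, s2 k
  rw [hDval] at him
  have hsqne : sq ≠ 0 := hsqpos.ne'
  field_simp at him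
  have him2 : m * ρt = -(u + (sq*sq) * w) :=
    mul_left_cancel₀ ((mul_pos (mul_pos two_pos hsqpos) (pow_pos hℏ 3)).ne')
      (by linear_combination (2 * sq * ℏ ^ 3) * him)
  rw [← hsqr]
  field_simp
  linear_combination him2
end
end
end
end
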